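/- arXiv:2406.15011 — 3 statements merged into one kernel-verified Lean document; each statement's English description precedes it below -/
import Mathlib

section
/- Let l and r be full binary trees, let e = postEnc(l) ++ postEnc(r), and for 0 ≤ j ≤ |e| let E(j) = count_false(e[1..j]) − count_true(e[1..j]) be the excess of the length-j prefix of e (as an integer). Then the maximum index j with 0 ≤ j ≤ |e| and E(j) = E(|e|) − 1 equals |postEnc(l)|. (This is the correctness of computing the left child of an internal node v of a full binary tree from its post-order encoding as lchild(v) = bwdsearch(v−1, −1): the subtree rooted at the right child is itself a full binary tree whose leaves exceed its internal nodes by exactly one, so every strictly later prefix position inside postEnc(r) has excess strictly greater than E(|postEnc(l)|).) -/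
/-- A full binary tree: every node is a leaf or has exactly two children. -/
inductive FullBinTree : Type
  | leaf : FullBinTree
  | node : FullBinTree → FullBinTree → FullBinTree

/-- Post-order encoding of a full binary tree: `false` for a leaf, `true` for an internal
node, listed in post-order. -/
def postEnc : FullBinTree → List Bool
  | FullBinTree.leaf => [false]
  | FullBinTree.node l r => postEnc l ++ postEnc r ++ [true]

/-- Excess of the length-`j` prefix of a list of Booleans: number of `false` entries minus
number of `true` entries, as an integer. -/
def excess (e : List Bool) (j : ℕ) : ℤ :=
  ((e.take j).count false : ℤ) - ((e.take j).count true : ℤ)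

lemma excess_append (a b : List Bool) (j : ℕ) :
    excess (a ++ b) j = excess a j + excess b (j - a.length) := by
  simp [excess, List.take_append, List.count_append]
  ring

lemma excess_sat (e : List Bool) {j : ℕ} (h : e.length ≤ j) :
    excess e j = excess e e.length := by
  simp [excess, List.take_of_length_le h]

lemma postEnc_length_pos (t : FullBinTree) : 1 ≤ (postEnc t).length := by
  induction t with
  | leaf => simp [postEnc]
  | node l r ihl ihr => simp [postEnc]; omega

lemma excess_postEnc_full (t : FullBinTree) :
    excess (postEnc t) (postEnc t).length = 1 := by
  induction t with
  | leaf => simp [postEnc, excess]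
  | node l r ihl ihr =>
    rw [postEnc, excess_append, excess_append]
    rw [excess_sat (postEnc l) (by simp), excess_sat (postEnc r) (by simp)]
    have h1 : (postEnc l ++ postEnc r ++ [true]).length - (postEnc l ++ postEnc r).length
        = 1 := by simp; omega
    rw [h1, ihl, ihr]
    simp [excess]

lemma excess_postEnc_ge (t : FullBinTree) {j : ℕ} (h1 : 1 ≤ j)
    (h2 : j ≤ (postEnc t).length) : 1 ≤ excess (postEnc t) j := by
  induction t generalizing j with
  | leaf =>
    simp only [postEnc, List.length_singleton] at h2
    interval_cases j
    simp [postEnc, excess]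
  | node l r ihl ihr =>
    rw [postEnc] at h2 ⊢
    have hlen : (postEnc l ++ postEnc r ++ [true]).length
        = (postEnc l).length + (postEnc r).length + 1 := by simp; omega
    have hlen2 : (postEnc l ++ postEnc r).length
        = (postEnc l).length + (postEnc r).length := by simp
    have h0 : excess [true] 0 = 0 := by simp [excess]
    have hm1 : excess [true] 1 = -1 := by simp [excess]
    rw [excess_append, excess_append]
    by_cases hl : j ≤ (postEnc l).length
    · have e1 : j - (postEnc l).length = 0 := by omega
      have e2 : j - (postEnc l ++ postEnc r).length = 0 := by omega
      have e3 : excess (postEnc r) 0 = 0 := by simp [excess]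
      rw [e1, e2, e3, h0]
      have := ihl h1 hl
      linarith
    · rw [excess_sat (postEnc l) (by omega), excess_postEnc_full]
      by_cases hr : j - (postEnc l).length ≤ (postEnc r).length
      · have e2 : j - (postEnc l ++ postEnc r).length = 0 := by omega
        rw [e2, h0]
        have := ihr (j := j - (postEnc l).length) (by omega) hr
        linarith
      · have e2 : j - (postEnc l ++ postEnc r).length = 1 := by omega
        rw [excess_sat (postEnc r) (by omega), excess_postEnc_full, e2, hm1]
        norm_num

/-- For `e = postEnc l ++ postEnc r`, the greatest index `j ≤ |e|` whose prefix excess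
equals `E(|e|) - 1` is exactly `|postEnc l|` (correctness of `lchild` via `bwdsearch`). -/
theorem bwdsearch_left_child (l r : FullBinTree) :
    IsGreatest
      {j : ℕ | j ≤ (postEnc l ++ postEnc r).length ∧
        excess (postEnc l ++ postEnc r) j
          = excess (postEnc l ++ postEnc r) (postEnc l ++ postEnc r).length - 1}
      (postEnc l).length := by
  have hfullE : excess (postEnc l ++ postEnc r) (postEnc l ++ postEnc r).length = 2 := by
    rw [excess_append, excess_sat (postEnc l) (by simp), excess_postEnc_full]
    have : (postEnc l ++ postEnc r).length - (postEnc l).length = (postEnc r).length := by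
      simp
    rw [this, excess_postEnc_full]
    norm_num
  constructor
  · refine ⟨by simp, ?_⟩
    rw [hfullE, excess_append, excess_sat (postEnc l) le_rfl, excess_postEnc_full]
    simp [excess]
  · intro j hj
    obtain ⟨hjle, hje⟩ := hj
    by_contra hgt
    push_neg at hgt
    rw [hfullE] at hje
    rw [excess_append, excess_sat (postEnc l) (by omega), excess_postEnc_full] at hje
    have hr : 1 ≤ excess (postEnc r) (j - (postEnc l).length) := by
      apply excess_postEnc_ge
      · omega
      · have : (postEnc l ++ postEnc r).length
            = (postEnc l).length + (postEnc r).length := by simp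
        omega
    omega
end

section
/- For every full binary tree t, there exist a list p of Booleans and the natural number s = rightSpine(t) such that postEnc(t) = p ++ [false] ++ replicate(s, true), where rightSpine(leaf) = 0 and rightSpine(node(l,r)) = rightSpine(r) + 1. Equivalently, the last occurrence of false in postEnc(t) is at position |postEnc(t)| − s, i.e., the encoding ends with the rightmost leaf followed by one true for each internal node on the rightmost root-to-leaf path. (This underlies the correctness of computing rmleaf(v), the rightmost leaf in the subtree rooted at v, as select₀(B, rank₀(B, v)) on the post-order encoding B.) -/
/-- Number of internal nodes on the rightmost root-to-leaf path of a full binary tree. -/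
def rightSpine : FullBinTree → ℕ
  | FullBinTree.leaf => 0
  | FullBinTree.node _ r => rightSpine r + 1

/-- The post-order encoding of a full binary tree ends with a `false` (the rightmost leaf)
followed by exactly `rightSpine t` copies of `true` (one for each internal node on the
rightmost root-to-leaf path). -/
theorem postEnc_ends_with_right_spine (t : FullBinTree) :
    ∃ p : List Bool, postEnc t = p ++ [false] ++ List.replicate (rightSpine t) true := by
  induction t with
  | leaf => exact ⟨[], rfl⟩
  | node l r ihl ihr =>
    obtain ⟨p, hp⟩ := ihr
    refine ⟨postEnc l ++ p, ?_⟩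
    simp [postEnc, rightSpine, hp, List.replicate_succ' (n := rightSpine r)]
end

section
/- Let G be an SLP in normal form with n variables over an alphabet of size σ, given by a rule function R where for each variable i the two symbols of R(i), when they are variables, have index strictly smaller than i, and let exp denote the expansion function. Let u₁, u₂, …, u_m be variables forming a chain, i.e., for each 1 ≤ j < m there is a symbol w_j such that either R(u_j) = (w_j, u_{j+1}) (w_j is the left child) or R(u_j) = (u_{j+1}, w_j) (w_j is the right child), and let (y, z) = R(u_m). Let v₁, …, v_{m+1} be the sequence of symbols consisting of: the symbols w_j that are left children, in increasing order of j; then y and z; then the symbols w_j that are right children, in decreasing order of j. Then exp(u₁) = exp(v₁) ++ exp(v₂) ++ ⋯ ++ exp(v_{m+1}). In words: the m+1 endpoints of the edges branching out of a chain of m variables, listed in preorder of the left-to-right traversal from u₁, split the expansion of u₁ into m+1 consecutive substrings. -/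
/-- Consider an SLP in normal form with `n` variables over an alphabet of size `σ`,
modeled by a rule function `R : Fin n → Sym × Sym` with `Sym := Fin n ⊕ Fin σ`, satisfying
the acyclicity condition, and let `exp` be its expansion function (characterized by its
defining equations).  If `u 1, …, u m` is a chain of variables, where for each `1 ≤ j < m`
the variable `u (j+1)` is one child of `u j` and `w j` is the other child (`d j = true`
meaning `w j` is the left child), then the expansion of `u 1` is split by the `m + 1`
branching symbols — the left-child `w j`'s in increasing order of `j`, then the two
children of `u m`, then the right-child `w j`'s in decreasing order of `j` — into `m + 1`
consecutive substrings. -/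
theorem slp_chain_splits_expansion (n σ m : ℕ) (hm : 1 ≤ m)
    (R : Fin n → (Fin n ⊕ Fin σ) × (Fin n ⊕ Fin σ))
    (hacyc : ∀ i : Fin n,
      (∀ j : Fin n, (R i).1 = Sum.inl j → (j : ℕ) < (i : ℕ)) ∧
      (∀ j : Fin n, (R i).2 = Sum.inl j → (j : ℕ) < (i : ℕ)))
    (exp : (Fin n ⊕ Fin σ) → List (Fin σ))
    (hexpT : ∀ a : Fin σ, exp (Sum.inr a) = [a])
    (hexpV : ∀ i : Fin n, exp (Sum.inl i) = exp ((R i).1) ++ exp ((R i).2))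
    (u : ℕ → Fin n) (w : ℕ → (Fin n ⊕ Fin σ)) (d : ℕ → Bool)
    (hchain : ∀ j, 1 ≤ j → j < m →
      R (u j) = if d j then (w j, Sum.inl (u (j + 1))) else (Sum.inl (u (j + 1)), w j)) :
    exp (Sum.inl (u 1)) =
      (((((List.range (m - 1)).map (· + 1)).filter (fun j => d j)).map w
          ++ [(R (u m)).1, (R (u m)).2]
          ++ ((((List.range (m - 1)).map (· + 1)).filter (fun j => !d j)).map w).reverse).map
        exp).flatten := by
  induction m, hm using Nat.le_induction generalizing u w d with
  | base => simp [hexpV]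
  | succ m hm ih =>
    obtain ⟨k, rfl⟩ : ∃ k, m = k + 1 := ⟨m - 1, by omega⟩
    have h1 := hchain 1 le_rfl (by omega)
    have ih2 := ih (fun j => u (j + 1)) (fun j => w (j + 1)) (fun j => d (j + 1))
      (fun j hj hj' => hchain (j + 1) (by omega) (by omega))
    have key : ∀ (p : ℕ → Bool) {α : Type} (g : ℕ → α),
        List.map g (List.filter p (List.map ((fun x => x + 1) ∘ Nat.succ) (List.range k))) =
        List.map (fun j => g (j + 1))
          (List.filter (fun j => p (j + 1)) (List.map (fun x => x + 1) (List.range k))) := by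
      intro p α g
      simp [List.filter_map, List.map_map, Function.comp_def]
    have key2 : ∀ (p : ℕ → Bool) (g : ℕ → List (Fin σ)),
        List.map (fun x => g x) (List.filter (fun j => p j)
            (List.map (fun x => x + 1 + 1) (List.range k))) =
        List.map (fun x => g (x + 1)) (List.filter (fun j => p (j + 1))
            (List.map (fun x => x + 1) (List.range k))) := by
      intro p g
      simp [List.filter_map, List.map_map, Function.comp_def]
    simp only [Nat.succ_sub_one] at ih2 ⊢
    rw [List.range_succ_eq_map]
    simp only [List.map_cons, List.filter_cons, Nat.zero_add]
    cases hd : d 1 <;> simp only [hd, Bool.not_true, Bool.not_false, if_true, if_false,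
      Bool.false_eq_true, ite_true, ite_false, List.map_cons,
      List.reverse_cons, key]
    · -- d 1 = false
      rw [hexpV, h1]
      simp only [hd, Bool.false_eq_true, if_false]
      rw [ih2]
      simp only [List.map_append, List.flatten_append, List.map_cons, List.map_map,
        List.flatten_cons, List.map_nil, List.flatten_nil, List.append_assoc,
        List.append_nil, List.map_reverse, Function.comp_def]
      rw [key2 (fun j => d j) (fun x => exp (w x)), key2 (fun j => !d j) (fun x => exp (w x))]
    · -- d 1 = true
      rw [hexpV, h1]
      simp only [hd, if_true]
      rw [ih2]
      simp only [List.map_append, List.flatten_append, List.map_cons, List.map_map,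
        List.flatten_cons, List.map_nil, List.flatten_nil, List.append_assoc,
        List.append_nil, List.map_reverse, Function.comp_def]
      rw [key2 (fun j => d j) (fun x => exp (w x)), key2 (fun j => !d j) (fun x => exp (w x))]
end
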